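/- arXiv:2002.00332 — 10 statements merged into one kernel-verified Lean document; each statement's English description precedes it below -/
import Mathlib

section
/- Let n ≥ 2 and c ∈ [−1/(n−1), 0). For every n×n real positive semidefinite matrix A, the matrix f_*[A] which equals A on the diagonal and c·a_{ij} off the diagonal is positive semidefinite. -/
/-!
Let `D` be the diagonal part of `A`. Then `f_*[A] = (1 - c) D + c A
= (1 + c (n - 1)) D + (-c) (n D - A)`, and both coefficients are nonnegative. The matrix `D` is
positive semidefinite, and so is `n D - A`, because `2 (n D - A)` is the sum over all `i, j` of
`E A E` with `E = diag (eᵢ - eⱼ)`.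
-/

open Finset Matrix

namespace Matrix

variable {R n : Type*} [Fintype n] [DecidableEq n]

theorem sum_sum_diagonal_single_sub_mul_mul [CommRing R] (A : Matrix n n R) :
    ∑ i, ∑ j, diagonal (Pi.single i 1 - Pi.single j 1) * A *
        diagonal (Pi.single i 1 - Pi.single j 1)
      = 2 • (Fintype.card n • diagonal A.diag - A) := by
  ext k l
  simp only [sum_apply, smul_apply, sub_apply]
  simp only [nsmul_eq_mul, diagonal_mul, mul_diagonal, Pi.sub_apply, Pi.single_apply, sub_mul,
    mul_sub, sum_sub_distrib, mul_ite, ite_mul, mul_one, mul_zero, zero_mul, one_mul]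
  obtain rfl | hkl := eq_or_ne k l
  · simp [sum_ite_eq, sum_const]
    ring
  · simp [sum_ite_eq, hkl]
    ring

open scoped ComplexOrder

variable {𝕜 : Type*} [RCLike 𝕜]

theorem PosSemidef.card_smul_diagonal_diag_sub {A : Matrix n n 𝕜} (hA : A.PosSemidef) :
    (Fintype.card n • diagonal A.diag - A).PosSemidef := by
  have htwice : (2 • (Fintype.card n • diagonal A.diag - A)).PosSemidef := by
    rw [← sum_sum_diagonal_single_sub_mul_mul]
    refine posSemidef_sum _ fun i _ ↦ posSemidef_sum _ fun j _ ↦ ?_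
    have hconj :=
      hA.conjTranspose_mul_mul_same (diagonal (Pi.single i 1 - Pi.single j 1 : n → 𝕜))
    rwa [diagonal_conjTranspose, star_sub, Pi.star_single, Pi.star_single, star_one] at hconj
  convert htwice.smul (a := (2⁻¹ : ℝ)) (by norm_num) using 1
  module

theorem PosSemidef.one_sub_smul_diagonal_diag_add_smul {A : Matrix n n 𝕜} (hA : A.PosSemidef)
    {c : ℝ} (hc : c ≤ 0) (hcn : 0 ≤ 1 + c * (Fintype.card n - 1)) :
    ((1 - c) • diagonal A.diag + c • A).PosSemidef := by
  have hD : (diagonal A.diag).PosSemidef := PosSemidef.diagonal fun _ ↦ hA.diag_nonneg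
  convert (hD.smul hcn).add (hA.card_smul_diagonal_diag_sub.smul (neg_nonneg.mpr hc)) using 1
  module

end Matrix

theorem fstar_neg_c_posSemidef_general (n : ℕ) (c : ℝ)
    (hc : c ∈ Set.Ico (-1 / (n - 1) : ℝ) 0)
    (A : Matrix (Fin n) (Fin n) ℝ) (hA : A.PosSemidef) :
    (Matrix.of fun i j => if i = j then A i j else c * A i j).PosSemidef := by
  obtain ⟨hc_ge, hc_neg⟩ := hc
  have hcoef : 0 ≤ 1 + c * (Fintype.card (Fin n) - 1) := by
    rw [Fintype.card_fin]
    rcases lt_or_ge 0 ((n : ℝ) - 1) with hpos | hnonpos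
    · linarith [(div_le_iff₀ hpos).mp hc_ge]
    · nlinarith
  have hfstar : (Matrix.of fun i j => if i = j then A i j else c * A i j)
      = (1 - c) • diagonal A.diag + c • A := by
    ext i j
    obtain rfl | hij := eq_or_ne i j
    · simp only [of_apply, ↓reduceIte, Matrix.add_apply, Matrix.smul_apply, diagonal_apply_eq,
        diag_apply, smul_eq_mul]
      ring
    · simp [hij]
  exact hfstar ▸ hA.one_sub_smul_diagonal_diag_add_smul hc_neg.le hcoef

theorem fstar_neg_c_posSemidef (n : ℕ) (hn : 2 ≤ n) (c : ℝ)
    (hc : c ∈ Set.Ico (-1 / (n - 1) : ℝ) 0)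
    (A : Matrix (Fin n) (Fin n) ℝ) (hA : A.PosSemidef) :
    (Matrix.of fun i j => if i = j then A i j else c * A i j).PosSemidef :=
  fstar_neg_c_posSemidef_general n c hc A hA
end

section
/- Let n ≥ 2 and c ∈ ℝ. If for every n×n real positive semidefinite matrix A the matrix f_*[A] (diagonal unchanged, off-diagonal entries multiplied by c) is positive semidefinite, then c ∈ [−1/(n−1), 1]. -/
/-!
Apply the hypothesis to the all-ones matrix `J`: then `f_*[J] = c J + (1 - c) I`, whose quadratic
form is `x ↦ c (∑ xᵢ)² + (1 - c) ∑ xᵢ²`. Evaluating it at the all-ones vector gives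
`c n² + (1 - c) n ≥ 0`, i.e. `c ≥ -1/(n-1)`, and at `eᵢ - eⱼ` gives `2 (1 - c) ≥ 0`.
-/

open Matrix

variable {ι R : Type*} [Fintype ι] [DecidableEq ι]

/-- The paper's `f_*[A]` for `f x = c x`. -/
def offDiagScale [Mul R] (c : R) (A : Matrix ι ι R) : Matrix ι ι R :=
  of fun i j => if i = j then A i j else c * A i j

omit [Fintype ι] in
theorem offDiagScale_vecMulVec_one [CommRing R] (c : R) :
    offDiagScale c (vecMulVec (1 : ι → R) 1) = c • vecMulVec 1 1 + (1 - c) • 1 := by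
  ext i j
  by_cases hij : i = j <;> simp [offDiagScale, vecMulVec_apply, one_apply, hij]

theorem dotProduct_offDiagScale_vecMulVec_one_mulVec [CommRing R] (c : R) (x : ι → R) :
    x ⬝ᵥ offDiagScale c (vecMulVec 1 1) *ᵥ x = c * (∑ i, x i) ^ 2 + (1 - c) * ∑ i, x i ^ 2 := by
  rw [offDiagScale_vecMulVec_one, add_mulVec, smul_mulVec, smul_mulVec, vecMulVec_mulVec,
    one_mulVec, dotProduct_add, dotProduct_smul, dotProduct_smul, dotProduct_smul, one_dotProduct,
    dotProduct_one]
  simp only [smul_eq_mul, op_smul_eq_mul, sq, dotProduct]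

theorem le_one_of_posSemidef_offDiagScale {c : ℝ} {i j : ι} (hij : i ≠ j)
    (hc : (offDiagScale c (vecMulVec (1 : ι → ℝ) 1)).PosSemidef) : c ≤ 1 := by
  set v : ι → ℝ := Pi.single i 1 - Pi.single j 1
  have hsum : ∑ k, v k = 0 := by simp [v, Finset.sum_sub_distrib]
  have hsq : ∑ k, v k ^ 2 = 2 := by
    simp [v, sub_sq, Pi.single_apply, hij.symm, Finset.sum_add_distrib]
    norm_num
  have hv := hc.dotProduct_mulVec_nonneg v
  rw [star_trivial, dotProduct_offDiagScale_vecMulVec_one_mulVec, hsum, hsq] at hv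
  linarith

theorem neg_one_le_mul_card_sub_one_of_posSemidef_offDiagScale [Nonempty ι] {c : ℝ}
    (hc : (offDiagScale c (vecMulVec (1 : ι → ℝ) 1)).PosSemidef) :
    -1 ≤ c * (Fintype.card ι - 1) := by
  have hv := hc.dotProduct_mulVec_nonneg 1
  rw [star_trivial, dotProduct_offDiagScale_vecMulVec_one_mulVec] at hv
  simp only [Pi.one_apply, Finset.sum_const, Finset.card_univ, nsmul_eq_mul, mul_one,
    one_pow] at hv
  have hcard : (0 : ℝ) < Fintype.card ι := by exact_mod_cast Fintype.card_pos
  nlinarith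

theorem fstar_posSemidef_necessity (n : ℕ) (hn : 2 ≤ n) (c : ℝ)
    (h : ∀ A : Matrix (Fin n) (Fin n) ℝ, A.PosSemidef →
      (Matrix.of fun i j => if i = j then A i j else c * A i j).PosSemidef) :
    c ∈ Set.Icc (-1 / (n - 1) : ℝ) 1 := by
  have : NeZero n := ⟨by omega⟩
  have hJ : (vecMulVec (1 : Fin n → ℝ) 1).PosSemidef := by
    simpa using posSemidef_vecMulVec_self_star (1 : Fin n → ℝ)
  have hc : (offDiagScale c (vecMulVec (1 : Fin n → ℝ) 1)).PosSemidef := h _ hJ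
  have hn' : (0 : ℝ) < n - 1 := by
    have : (2 : ℝ) ≤ n := by exact_mod_cast hn
    linarith
  constructor
  · have := neg_one_le_mul_card_sub_one_of_posSemidef_offDiagScale hc
    rw [Fintype.card_fin] at this
    rwa [div_le_iff₀ hn']
  · exact le_one_of_posSemidef_offDiagScale (i := ⟨0, by omega⟩) (j := ⟨1, hn⟩) (by simp) hc
end

section
/- Let n ≥ 2, let T be a partition of {1,…,n} into k ≥ 2 blocks, and let c ∈ [−1/(k−1), 1]. For every n×n complex positive semidefinite matrix A, the matrix f_T[A] defined by (f_T[A])_{ij} = a_{ij} if i and j lie in the same block of T and (f_T[A])_{ij} = c·a_{ij} otherwise, is positive semidefinite. -/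
/-!
`f_T[A]` is the Schur product of `A` with `E.submatrix π π`, where `E = (1 - c) I + c J` is the
`k × k` equicorrelation matrix (`J` the all-ones matrix). Since
`E = (1 - c) (I - J / k) + ((1 + (k - 1) c) / k) J` and `I - J / k` is an orthogonal projection,
`E` is positive semidefinite when `-1 / (k - 1) ≤ c ≤ 1`; the Schur product theorem
finishes the proof.
-/

open scoped ComplexOrder

namespace Matrix

variable {ι 𝕜 : Type*} [Fintype ι] [DecidableEq ι] [RCLike 𝕜]

def equicorrelation (c : 𝕜) : Matrix ι ι 𝕜 := of fun i j => if i = j then 1 else c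

omit [DecidableEq ι] in
lemma posSemidef_allOnes : (of fun _ _ => 1 : Matrix ι ι 𝕜).PosSemidef := by
  simpa [vecMulVec] using posSemidef_vecMulVec_self_star (1 : ι → 𝕜)

omit [DecidableEq ι] in
lemma allOnes_mul_allOnes :
    (of fun _ _ => 1 : Matrix ι ι 𝕜) * of (fun _ _ => 1) =
      (Fintype.card ι : 𝕜) • of fun _ _ => 1 := by
  ext i j
  simp [mul_apply]

lemma posSemidef_one_sub_inv_card_smul_allOnes :
    (1 - (Fintype.card ι : 𝕜)⁻¹ • of fun _ _ => 1 : Matrix ι ι 𝕜).PosSemidef := by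
  set P : Matrix ι ι 𝕜 := 1 - (Fintype.card ι : 𝕜)⁻¹ • of fun _ _ => 1
  have hP : P.IsHermitian := by
    ext i j
    simp [P, one_apply, eq_comm]
  have hPP : P * P = P := by
    rcases isEmpty_or_nonempty ι with hι | hι
    · exact Subsingleton.elim _ _
    have hk : (Fintype.card ι : 𝕜) ≠ 0 := by simp
    simp only [P, sub_mul, mul_sub, one_mul, mul_one, smul_mul_smul_comm, allOnes_mul_allOnes,
      smul_smul]
    rw [inv_mul_cancel_right₀ hk]
    abel
  simpa [hP.eq, hPP] using posSemidef_self_mul_conjTranspose P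

lemma posSemidef_equicorrelation {c : 𝕜} (hc : c ≤ 1)
    (hc' : 0 ≤ 1 + (Fintype.card ι - 1) * c) :
    (equicorrelation c : Matrix ι ι 𝕜).PosSemidef := by
  rcases isEmpty_or_nonempty ι with hι | hι
  · exact Subsingleton.elim (0 : Matrix ι ι 𝕜) (equicorrelation c) ▸ .zero
  have hk : (Fintype.card ι : 𝕜) ≠ 0 := by simp
  have hdecomp : (equicorrelation c : Matrix ι ι 𝕜) =
      (1 - c) • (1 - (Fintype.card ι : 𝕜)⁻¹ • of fun _ _ => 1) +
        ((Fintype.card ι : 𝕜)⁻¹ * (1 + (Fintype.card ι - 1) * c)) • of fun _ _ => 1 := by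
    ext i j
    by_cases hij : i = j <;> simp [equicorrelation, hij] <;> field_simp <;> ring
  rw [hdecomp]
  exact (posSemidef_one_sub_inv_card_smul_allOnes.smul (sub_nonneg.2 hc)).add
    (posSemidef_allOnes.smul (mul_nonneg (by positivity) hc'))

end Matrix

open Matrix

theorem partition_scale_posSemidef_general (n k : ℕ) (hk : 2 ≤ k)
    (π : Fin n → Fin k)
    (c : ℝ) (hc : c ∈ Set.Icc (-1 / (k - 1) : ℝ) 1)
    (A : Matrix (Fin n) (Fin n) ℂ) (hA : A.PosSemidef) :
    (Matrix.of fun i j => if π i = π j then A i j else (c : ℂ) * A i j).PosSemidef := by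
  obtain ⟨hc_lower, hc_upper⟩ := hc
  have hk_pos : (0 : ℝ) < k - 1 := by
    have : (2 : ℝ) ≤ k := by exact_mod_cast hk
    linarith
  have hc' : 0 ≤ 1 + ((k : ℝ) - 1) * c := by
    linarith [(div_le_iff₀ hk_pos).1 hc_lower]
  have hE : (equicorrelation (c : ℂ) : Matrix (Fin k) (Fin k) ℂ).PosSemidef := by
    refine posSemidef_equicorrelation (by exact_mod_cast hc_upper) ?_
    rw [Fintype.card_fin]
    exact_mod_cast hc'
  have hfT : (of fun i j => if π i = π j then A i j else (c : ℂ) * A i j) =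
      A ⊙ (equicorrelation (c : ℂ)).submatrix π π := by
    ext i j
    by_cases hij : π i = π j <;> simp [equicorrelation, hij, mul_comm]
  rw [hfT]
  exact hA.hadamard (hE.submatrix π)

theorem partition_scale_posSemidef (n k : ℕ) (hn : 2 ≤ n) (hk : 2 ≤ k)
    (π : Fin n → Fin k) (hπ : Function.Surjective π)
    (c : ℝ) (hc : c ∈ Set.Icc (-1 / (k - 1) : ℝ) 1)
    (A : Matrix (Fin n) (Fin n) ℂ) (hA : A.PosSemidef) :
    (Matrix.of fun i j => if π i = π j then A i j else (c : ℂ) * A i j).PosSemidef :=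
  partition_scale_posSemidef_general n k hk π c hc A hA
end

section
/- Let n ≥ 2, let T be a partition of {1,…,n} into k blocks, and let c ∈ [−1/(k−1), 1]. Then the n×n matrix M with M_{ij} = 1 if i,j lie in the same block of T and M_{ij} = c otherwise, is positive semidefinite. -/
/-!
The pattern matrix is the `k × k` matrix `(1 - c) I + c J` pulled back along the block map
`π`, i.e. its submatrix indexed by `π` on both sides, and submatrices of positive semidefinite
matrices are positive semidefinite. The quadratic form of `(1 - c) I + c J` is
`(1 - c) ‖x‖² + c (∑ xᵢ)²`; for `c ≥ 0` both terms are nonnegative, and for `c < 0`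
Cauchy–Schwarz `(∑ xᵢ)² ≤ k ‖x‖²` bounds it below by `(1 + c (k - 1)) ‖x‖² ≥ 0`.
-/

open Finset Matrix

lemma one_add_mul_sub_one_nonneg {c m : ℝ} (hc : -1 / (m - 1) ≤ c) (hc0 : c < 0) :
    0 ≤ 1 + c * (m - 1) := by
  rcases lt_or_ge 0 (m - 1) with hm | hm
  · linarith [(div_le_iff₀ hm).mp hc]
  · nlinarith

lemma one_sub_mul_sum_sq_add_mul_sq_sum_nonneg {ι : Type*} (s : Finset ι) (f : ι → ℝ) {c : ℝ}
    (hc : c ∈ Set.Icc (-1 / (#s - 1 : ℝ)) 1) :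
    0 ≤ (1 - c) * ∑ i ∈ s, f i ^ 2 + c * (∑ i ∈ s, f i) ^ 2 := by
  obtain ⟨hlo, hhi⟩ := hc
  have hsq : 0 ≤ ∑ i ∈ s, f i ^ 2 := sum_nonneg fun i _ => sq_nonneg (f i)
  rcases le_or_gt 0 c with hc0 | hc0
  · have := mul_nonneg (sub_nonneg.mpr hhi) hsq
    positivity
  · calc 0 ≤ (1 + c * (#s - 1)) * ∑ i ∈ s, f i ^ 2 :=
          mul_nonneg (one_add_mul_sub_one_nonneg hlo hc0) hsq
      _ = (1 - c) * ∑ i ∈ s, f i ^ 2 + c * (#s * ∑ i ∈ s, f i ^ 2) := by ring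
      _ ≤ (1 - c) * ∑ i ∈ s, f i ^ 2 + c * (∑ i ∈ s, f i) ^ 2 :=
          add_le_add_right (mul_le_mul_of_nonpos_left sq_sum_le_card_mul_sum_sq hc0.le) _

def equicorrelationMatrix (ι : Type*) [DecidableEq ι] (c : ℝ) : Matrix ι ι ℝ :=
  Matrix.of fun i j => if i = j then 1 else c

namespace equicorrelationMatrix

variable {ι : Type*} [DecidableEq ι] (c : ℝ)

lemma isHermitian : (equicorrelationMatrix ι c).IsHermitian :=
  IsHermitian.ext fun i j => by simp [equicorrelationMatrix, eq_comm]

lemma eq_smul_one_add_const :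
    equicorrelationMatrix ι c = (1 - c) • (1 : Matrix ι ι ℝ) + Matrix.of fun _ _ => c := by
  ext i j
  by_cases h : i = j <;> simp [equicorrelationMatrix, h]

lemma dotProduct_mulVec [Fintype ι] (x : ι → ℝ) :
    x ⬝ᵥ equicorrelationMatrix ι c *ᵥ x = (1 - c) * ∑ i, x i ^ 2 + c * (∑ i, x i) ^ 2 := by
  have hconst : (Matrix.of fun _ _ => c : Matrix ι ι ℝ) *ᵥ x = fun _ => c * ∑ j, x j := by
    ext i
    simp [mulVec, dotProduct, Finset.mul_sum]
  rw [eq_smul_one_add_const, add_mulVec, smul_mulVec, one_mulVec, hconst, dotProduct_add,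
    dotProduct_smul]
  simp only [dotProduct, smul_eq_mul, ← Finset.sum_mul, sq]
  ring

lemma posSemidef [Fintype ι] {c : ℝ} (hc : c ∈ Set.Icc (-1 / (Fintype.card ι - 1 : ℝ)) 1) :
    (equicorrelationMatrix ι c).PosSemidef :=
  .of_dotProduct_mulVec_nonneg (isHermitian c) fun x => by
    rw [star_trivial, dotProduct_mulVec]
    exact one_sub_mul_sum_sq_add_mul_sq_sum_nonneg univ x hc

end equicorrelationMatrix

theorem partition_pattern_matrix_posSemidef_general (n k : ℕ)
    (π : Fin n → Fin k)
    (c : ℝ) (hc : c ∈ Set.Icc (-1 / (k - 1) : ℝ) 1) :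
    (Matrix.of fun i j : Fin n => if π i = π j then (1 : ℝ) else c).PosSemidef := by
  have hblocks : (equicorrelationMatrix (Fin k) c).PosSemidef :=
    equicorrelationMatrix.posSemidef (by rwa [Fintype.card_fin])
  exact hblocks.submatrix π

theorem partition_pattern_matrix_posSemidef (n k : ℕ) (hn : 2 ≤ n)
    (π : Fin n → Fin k) (hπ : Function.Surjective π)
    (c : ℝ) (hc : c ∈ Set.Icc (-1 / (k - 1) : ℝ) 1) :
    (Matrix.of fun i j : Fin n => if π i = π j then (1 : ℝ) else c).PosSemidef :=
  partition_pattern_matrix_posSemidef_general n k π c hc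
end

section
/- Let I ⊆ ℂ with I ∩ ℝ_{≥0} nonempty, and let g, f : I → ℂ. Suppose that for every n ≥ 1 and every n×n positive semidefinite matrix A with entries in I, the matrix (g,f)_*[A] (with g applied to diagonal entries and f to off-diagonal entries) is positive semidefinite. Then for every n and every positive semidefinite A with entries in I, the matrix f[A] (f applied to all entries) is positive semidefinite, and g(x) ≥ f(x) for all x ∈ I ∩ ℝ_{≥0}. -/
/-!
Writing `D` for the diagonal matrix of the `g (a_ii) - f (a_ii)`, the matrix `(g, f)_*[J_m ⊗ A]`
equals `J_m ⊗ f[A] + I_m ⊗ D`. Compressing it with the block column `[I; …; I]` yields the positive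
semidefinite matrix `m² f[A] + m D`, so `f[A] + D / m` is positive semidefinite for every `m ≥ 1`,
and so is its limit `f[A]`, the positive semidefinite cone being closed. For `x ≥ 0` in `I`, testing
`(g, f)_*[x J_2]` against the vector `(1, -1)` gives `2 (g x - f x) ≥ 0`.
-/

open scoped ComplexOrder Topology
open Matrix Filter

namespace Matrix

section Closed

variable {n R : Type*} [Fintype n] [Ring R] [PartialOrder R] [StarRing R] [TopologicalSpace R]
  [IsTopologicalRing R] [ContinuousStar R] [OrderClosedTopology R]

theorem isClosed_setOf_posSemidef : IsClosed {A : Matrix n n R | A.PosSemidef} := by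
  have hset : {A : Matrix n n R | A.PosSemidef} =
      {A | Aᴴ = A} ∩ ⋂ x : n → R, {A | 0 ≤ star x ⬝ᵥ (A *ᵥ x)} := by
    ext A
    simp only [Set.mem_ofPred_eq, Set.mem_inter_iff, Set.mem_iInter,
      posSemidef_iff_dotProduct_mulVec, IsHermitian]
  rw [hset]
  exact (isClosed_eq continuous_id.matrix_conjTranspose continuous_id).inter <|
    isClosed_iInter fun x => isClosed_le continuous_const <|
      continuous_const.dotProduct (continuous_id.matrix_mulVec continuous_const)

end Closed

section DiagOffDiag

variable {n α β : Type*} [DecidableEq n]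

/-- The paper's `(g, f)_*[A]`. -/
def diagOffDiagMap (g f : α → β) (A : Matrix n n α) : Matrix n n β :=
  of fun i j => if i = j then g (A i j) else f (A i j)

theorem diagOffDiagMap_eq_map_add_diagonal [AddCommGroup β] (g f : α → β) (A : Matrix n n α) :
    diagOffDiagMap g f A = A.map f + diagonal fun i => g (A i i) - f (A i i) := by
  ext i j
  by_cases hij : i = j
  · subst hij
    simp [diagOffDiagMap]
  · simp [diagOffDiagMap, hij]

theorem diagOffDiagMap_submatrix {m : Type*} [DecidableEq m] (g f : α → β) (A : Matrix n n α)
    {e : m → n} (he : Function.Injective e) :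
    diagOffDiagMap g f (A.submatrix e e) = (diagOffDiagMap g f A).submatrix e e := by
  ext i j
  simp [diagOffDiagMap, he.eq_iff]

end DiagOffDiag

section StackOne

variable (m : ℕ) (n R : Type*) [Fintype n] [DecidableEq n] [CommSemiring R] [StarRing R]

/-- The block column `[1; …; 1]` of `m` identity matrices. With this indexing the Kronecker product
`J_m ⊗ X` is `X.submatrix Prod.snd Prod.snd`. -/
def stackOne : Matrix (Fin m × n) n R := (1 : Matrix n n R).submatrix Prod.snd id

theorem stackOne_conjTranspose_mul_mul_apply (Y : Matrix (Fin m × n) (Fin m × n) R) (i j : n) :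
    ((stackOne m n R)ᴴ * Y * stackOne m n R) i j = ∑ k, ∑ l, Y (k, i) (l, j) := by
  simp only [stackOne, conjTranspose_submatrix, conjTranspose_one, mul_apply, submatrix_apply,
    one_apply, id_eq, ite_mul, one_mul, zero_mul, mul_ite, mul_one, mul_zero, Fintype.sum_prod_type,
    Finset.sum_ite_eq, Finset.sum_ite_eq', Finset.mem_univ, ↓reduceIte]
  exact Finset.sum_comm

theorem stackOne_conjTranspose_mul_submatrix_mul (X : Matrix n n R) :
    (stackOne m n R)ᴴ * (X.submatrix Prod.snd Prod.snd : Matrix (Fin m × n) (Fin m × n) R) *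
      stackOne m n R = m ^ 2 • X := by
  ext i j
  simp [stackOne_conjTranspose_mul_mul_apply, sq, mul_smul]

theorem stackOne_conjTranspose_mul_diagonal_mul (d : n → R) :
    (stackOne m n R)ᴴ * diagonal (fun p : Fin m × n => d p.2) * stackOne m n R = m • diagonal d := by
  ext i j
  by_cases hij : i = j <;>
    simp [stackOne_conjTranspose_mul_mul_apply, diagonal_apply, Prod.ext_iff, hij]

end StackOne

end Matrix

def DiagOffDiagMapPosSemidefOn (I : Set ℂ) (g f : ℂ → ℂ) : Prop :=
  ∀ n (A : Matrix (Fin n) (Fin n) ℂ), A.PosSemidef → (∀ i j, A i j ∈ I) →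
    (diagOffDiagMap g f A).PosSemidef

namespace DiagOffDiagMapPosSemidefOn

variable {I : Set ℂ} {g f : ℂ → ℂ} {ι : Type*} [Fintype ι] [DecidableEq ι] {A : Matrix ι ι ℂ}

theorem posSemidef (h : DiagOffDiagMapPosSemidefOn I g f) (hA : A.PosSemidef)
    (hAI : ∀ i j, A i j ∈ I) : (diagOffDiagMap g f A).PosSemidef := by
  let e := Fintype.equivFin ι
  have := (h _ (A.submatrix e.symm e.symm) (hA.submatrix _) fun _ _ => hAI _ _).submatrix e
  rwa [← diagOffDiagMap_submatrix _ _ _ e.injective, submatrix_submatrix, e.symm_comp_self,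
    submatrix_id_id] at this

theorem posSemidef_map_add_inv_smul (h : DiagOffDiagMapPosSemidefOn I g f)
    (hA : A.PosSemidef) (hAI : ∀ i j, A i j ∈ I) {m : ℕ} (hm : m ≠ 0) :
    (A.map f + (m : ℝ)⁻¹ • diagonal fun i => g (A i i) - f (A i i)).PosSemidef := by
  set D := diagonal fun i => g (A i i) - f (A i i)
  have hcompress : (stackOne m ι ℂ)ᴴ *
      diagOffDiagMap g f (A.submatrix Prod.snd Prod.snd : Matrix (Fin m × ι) (Fin m × ι) ℂ) *
      stackOne m ι ℂ = m ^ 2 • A.map f + m • D := by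
    rw [diagOffDiagMap_eq_map_add_diagonal, Matrix.mul_add, Matrix.add_mul, ← submatrix_map,
      stackOne_conjTranspose_mul_submatrix_mul, ← stackOne_conjTranspose_mul_diagonal_mul]
    rfl
  have hB := (h.posSemidef (hA.submatrix Prod.snd) fun _ _ => hAI _ _).conjTranspose_mul_mul_same
    (stackOne m ι ℂ)
  rw [hcompress] at hB
  convert hB.smul (inv_nonneg.2 (sq_nonneg (m : ℝ))) using 1
  have hm' : (m : ℝ) ≠ 0 := Nat.cast_ne_zero.2 hm
  rw [← Nat.cast_smul_eq_nsmul ℝ (m ^ 2), ← Nat.cast_smul_eq_nsmul ℝ m, Nat.cast_pow]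
  match_scalars <;> field_simp

theorem posSemidef_map (h : DiagOffDiagMapPosSemidefOn I g f) (hA : A.PosSemidef)
    (hAI : ∀ i j, A i j ∈ I) : (A.map f).PosSemidef := by
  set D := diagonal fun i => g (A i i) - f (A i i)
  have hlim : Tendsto (fun m : ℕ => A.map f + (m : ℝ)⁻¹ • D) atTop (𝓝 (A.map f)) := by
    simpa using tendsto_const_nhds.add ((tendsto_inv_atTop_nhds_zero_nat (𝕜 := ℝ)).smul_const D)
  exact isClosed_setOf_posSemidef.mem_of_tendsto hlim <|
    (eventually_ne_atTop 0).mono fun _ hm => h.posSemidef_map_add_inv_smul hA hAI hm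

theorem le_of_nonneg (h : DiagOffDiagMapPosSemidefOn I g f) {x : ℝ} (hx : 0 ≤ x)
    (hxI : (x : ℂ) ∈ I) : f x ≤ g x := by
  have hJ : (of fun _ _ => (x : ℂ) : Matrix (Fin 2) (Fin 2) ℂ).PosSemidef := by
    convert (posSemidef_vecMulVec_self_star (1 : Fin 2 → ℂ)).smul hx using 1
    ext
    simp
  have hform := (h 2 _ hJ fun _ _ => hxI).dotProduct_mulVec_nonneg ![1, -1]
  have hval : star ![(1 : ℂ), -1] ⬝ᵥ (diagOffDiagMap g f (of fun _ _ => (x : ℂ)) *ᵥ ![1, -1]) =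
      2 * (g x - f x) := by
    simp only [dotProduct, mulVec, diagOffDiagMap, of_apply, Fin.sum_univ_two, Pi.star_apply,
      cons_val_zero, cons_val_one, cons_val_fin_one, star_one, star_neg, ↓reduceIte, zero_ne_one,
      one_ne_zero]
    ring
  rw [hval] at hform
  exact sub_nonneg.1 <| le_of_mul_le_mul_left (by simpa using hform) (two_pos : (0 : ℂ) < 2)

end DiagOffDiagMapPosSemidefOn

theorem gf_star_preserver_implies_general (I : Set ℂ) (g f : ℂ → ℂ)
    (h : ∀ n : ℕ, ∀ A : Matrix (Fin n) (Fin n) ℂ, A.PosSemidef →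
      (∀ i j, A i j ∈ I) →
      (Matrix.of fun i j => if i = j then g (A i j) else f (A i j)).PosSemidef) :
    (∀ n : ℕ, ∀ A : Matrix (Fin n) (Fin n) ℂ, A.PosSemidef →
      (∀ i j, A i j ∈ I) → (A.map f).PosSemidef) ∧
    (∀ x : ℝ, 0 ≤ x → (x : ℂ) ∈ I →
      (g x - f x).im = 0 ∧ 0 ≤ (g x - f x).re) := by
  have hpres : DiagOffDiagMapPosSemidefOn I g f := h
  refine ⟨fun _ _ hA hAI => hpres.posSemidef_map hA hAI, fun _ hx hxI => ?_⟩
  obtain ⟨hre, him⟩ := Complex.nonneg_iff.1 (sub_nonneg.2 (hpres.le_of_nonneg hx hxI))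
  exact ⟨him.symm, hre⟩

theorem gf_star_preserver_implies (I : Set ℂ) (g f : ℂ → ℂ)
    (hI : ∃ x : ℝ, 0 ≤ x ∧ (x : ℂ) ∈ I)
    (h : ∀ n : ℕ, ∀ A : Matrix (Fin n) (Fin n) ℂ, A.PosSemidef →
      (∀ i j, A i j ∈ I) →
      (Matrix.of fun i j => if i = j then g (A i j) else f (A i j)).PosSemidef) :
    (∀ n : ℕ, ∀ A : Matrix (Fin n) (Fin n) ℂ, A.PosSemidef →
      (∀ i j, A i j ∈ I) → (A.map f).PosSemidef) ∧
    (∀ x : ℝ, 0 ≤ x → (x : ℂ) ∈ I →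
      (g x - f x).im = 0 ∧ 0 ≤ (g x - f x).re) :=
  gf_star_preserver_implies_general I g f h
end

section
/- Let r > 0 be real and let g, f : ℂ → ℂ. Suppose that for every z ∈ ℂ with |z| ≤ r, the 3×3 matrix [[g(r), g(z), f(z)], [conj(g(z)), g(r), g(r)], [conj(f(z)), g(r), g(r)]] is Hermitian positive semidefinite. Then for every such z, either g(r) = 0 and f(z) = g(z) = 0, or f(z) = g(z). -/
open scoped ComplexOrder

theorem overlapping_blocks_force_equality (r : ℝ) (hr : 0 < r) (g f : ℂ → ℂ)
    (h : ∀ z : ℂ, ‖z‖ ≤ r →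
      (Matrix.of ![![g r, g z, f z],
                   ![starRingEnd ℂ (g z), g r, g r],
                   ![starRingEnd ℂ (f z), g r, g r]]).PosSemidef) :
    ∀ z : ℂ, ‖z‖ ≤ r →
      (g r = 0 ∧ f z = 0 ∧ g z = 0) ∨ f z = g z := by
  intro z hz
  have hM := h z hz
  have hquad := hM.dotProduct_mulVec_nonneg
  have h00 : 0 ≤ g (r : ℂ) := by
    have := hquad ![1, 0, 0]
    simpa [Matrix.mulVec, dotProduct, Fin.sum_univ_three] using this
  by_cases hg0 : g (r : ℂ) = 0
  · left
    refine ⟨hg0, ?_, ?_⟩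
    · have h1 := hquad ![-(f z), 0, 1]
      simp [Matrix.mulVec, dotProduct, Fin.sum_univ_three, hg0,
        Complex.conj_mul', Matrix.vecHead, Matrix.vecTail] at h1
      have h1' : (‖f z‖)^2 ≤ -(‖f z‖)^2 := by exact_mod_cast h1
      have : ‖f z‖ = 0 := by nlinarith [norm_nonneg (f z)]
      exact norm_eq_zero.mp this
    · have h2 := hquad ![-(g z), 1, 0]
      simp [Matrix.mulVec, dotProduct, Fin.sum_univ_three, hg0,
        Complex.conj_mul'] at h2
      have h2' : (‖g z‖)^2 ≤ -(‖g z‖)^2 := by exact_mod_cast h2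
      have : ‖g z‖ = 0 := by nlinarith [norm_nonneg (g z)]
      exact norm_eq_zero.mp this
  · right
    obtain ⟨ht0, htim⟩ := Complex.nonneg_iff.mp h00
    set t : ℝ := (g (r : ℂ)).re with htdef
    have ht : g (r : ℂ) = (t : ℂ) := Complex.ext rfl htim.symm
    have htpos : t ≠ 0 := by
      intro h0
      exact hg0 (by rw [ht, h0]; simp)
    set b : ℂ := g z - f z with hb
    have hval : dotProduct (star ![-(b)/(t:ℂ), 1, -1])
        ((Matrix.of ![![g r, g z, f z],
                   ![starRingEnd ℂ (g z), g r, g r],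
                   ![starRingEnd ℂ (f z), g r, g r]]).mulVec ![-(b)/(t:ℂ), 1, -1])
        = ((-(Complex.normSq b) / t : ℝ) : ℂ) := by
      simp only [Matrix.mulVec, dotProduct, Fin.sum_univ_three, ht, hb,
        Matrix.of_apply, Matrix.cons_val', Matrix.cons_val_zero, Matrix.cons_val_one,
        Matrix.head_cons, Matrix.empty_val', Matrix.cons_val_fin_one, Matrix.head_fin_const,
        Pi.star_apply, star_div₀, star_neg, Complex.star_def, map_sub, Complex.conj_ofReal]
      have hnsq : (starRingEnd ℂ) (g z - f z) * (g z - f z)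
          = ((Complex.normSq (g z - f z) : ℝ) : ℂ) := by
        rw [Complex.normSq_eq_conj_mul_self]
      push_cast
      field_simp
      ring_nf
      rw [← hnsq, map_sub, map_neg, map_one]
      ring
    have hge := hquad ![-(b)/(t:ℂ), 1, -1]
    rw [hval] at hge
    have : (0:ℝ) ≤ -(Complex.normSq b) / t := by exact_mod_cast hge
    have hb0 : b = 0 := by
      have := Complex.normSq_nonneg b
      have htpos' : 0 < t := lt_of_le_of_ne ht0 (Ne.symm htpos)
      have : Complex.normSq b = 0 := by
        rcases div_nonneg_iff.mp ‹(0:ℝ) ≤ -(Complex.normSq b) / t› with ⟨h1,_⟩ | ⟨_,h2⟩ <;> linarith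
      exact Complex.normSq_eq_zero.mp this
    have := sub_eq_zero.mp hb0
    exact this.symm
end

section
/- Let 0 < ρ ≤ ∞, I = (0, ρ) ⊂ ℝ, and let g, f : I → ℝ with g(x) = α·x^k for some α > 0 and integer k ≥ 0. Suppose that for every rank-one 3×3 positive semidefinite matrix A with entries in I, the matrix obtained from A by applying g to the entries in positions (1,1),(1,2),(2,1),(2,2) and f to all other entries is positive semidefinite. Then there exists c ∈ [0, 1] such that f(x) = c·g(x) for all x ∈ I. -/
/-!
Test the hypothesis on the rank-one matrices `u uᵀ` with `u = (z, w, w) / √w`, `0 < z ≤ w < ρ`,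
whose entries are `z² / w`, `z` and `w`. Since `g (z² / w) * g w = g z ^ 2`, the leading 2×2 block
of the transformed matrix is singular, so the vector `(g w, -g z, 0)` lies in its kernel; reading
off the third coordinate gives `f z * g w = f w * g z`. Hence `f / g` is constant on `(0, ρ)`;
for `z = w`, the diagonal entry `f w` and the quadratic form at `e₂ - e₃`, which is `g w - f w`,
are nonnegative, which puts the constant in `[0, 1]`.
-/

open Matrix

theorem Matrix.rank_vecMulVec_eq_one {K m n : Type*} [Field K] [Fintype n]
    {u : m → K} {v : n → K} (hu : u ≠ 0) (hv : v ≠ 0) : (vecMulVec u v).rank = 1 := by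
  classical
  refine le_antisymm (rank_vecMulVec_le u v) (Nat.one_le_iff_ne_zero.mpr fun h0 => ?_)
  obtain ⟨i, hi⟩ := Function.ne_iff.mp hu
  obtain ⟨j, hj⟩ := Function.ne_iff.mp hv
  rw [Matrix.rank, Submodule.finrank_eq_zero, LinearMap.range_eq_bot] at h0
  have h : (vecMulVec u v *ᵥ Pi.single j 1) i = 0 := by
    rw [← mulVecLin_apply, h0]; rfl
  simp only [mulVec_single_one, col_apply, vecMulVec_apply, mul_eq_zero] at h
  tauto

namespace Matrix.PosSemidef

variable {n : Type*} [Fintype n] {B : Matrix n n ℝ}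

theorem two_mul_apply_le_add (hB : B.PosSemidef) (i j : n) : 2 * B i j ≤ B i i + B j j := by
  classical
  have h := hB.dotProduct_mulVec_nonneg (Pi.single i 1 - Pi.single j 1)
  have hsym : B j i = B i j := hB.isHermitian.apply i j
  simp only [star_trivial, mulVec_sub, mulVec_single_one, dotProduct_sub, sub_dotProduct,
    single_dotProduct, col_apply, one_mul] at h
  linarith

/-- A singular principal 2×2 block `{i, j}` of a positive semidefinite matrix forces every row
to be proportional on the columns `i` and `j`. -/
theorem apply_mul_eq_of_mul_eq_sq (hB : B.PosSemidef) {i j : n} (hij : B i i * B j j = B i j ^ 2)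
    (l : n) : B l i * B j j = B l j * B i j := by
  classical
  have hsym : B j i = B i j := hB.isHermitian.apply i j
  set x : n → ℝ := Pi.single i (B j j) - Pi.single j (B i j)
  have hBx : B *ᵥ x = fun l => B l i * B j j - B l j * B i j := by
    ext l
    simp only [x, mulVec_sub, mulVec_single, op_smul_eq_smul, Pi.sub_apply, Pi.smul_apply,
      col_apply, smul_eq_mul]
    ring
  have hquad : star x ⬝ᵥ B *ᵥ x = 0 := by
    simp only [hBx, star_trivial, x, sub_dotProduct, single_dotProduct, hsym]
    linear_combination B j j * hij
  have h := congrFun ((hB.dotProduct_mulVec_zero_iff x).mp hquad) l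
  rw [hBx] at h
  simpa [sub_eq_zero] using h

end Matrix.PosSemidef

def OffBlockPreservesPSD (ρ : EReal) (g f : ℝ → ℝ) : Prop :=
  ∀ A : Matrix (Fin 3) (Fin 3) ℝ, A.PosSemidef → A.rank = 1 →
    (∀ i j, 0 < A i j ∧ (A i j : EReal) < ρ) →
    (Matrix.of fun i j => if i.val ≤ 1 ∧ j.val ≤ 1 then g (A i j) else f (A i j)).PosSemidef

noncomputable def rankOneTestVector (z w : ℝ) : Fin 3 → ℝ := ![z / √w, √w, √w]

theorem rankOneTestVector_ne_zero {z w : ℝ} (hw : 0 < w) : rankOneTestVector z w ≠ 0 :=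
  fun h0 => (Real.sqrt_pos.mpr hw).ne' (congrFun h0 1)

theorem vecMulVec_rankOneTestVector {z w : ℝ} (hw : 0 < w) :
    vecMulVec (rankOneTestVector z w) (rankOneTestVector z w) =
      !![z ^ 2 / w, z, z; z, w, w; z, w, w] := by
  have hs : √w * √w = w := Real.mul_self_sqrt hw.le
  have hs0 : √w ≠ 0 := (Real.sqrt_pos.mpr hw).ne'
  ext i j
  fin_cases i <;> fin_cases j <;>
    simp [rankOneTestVector, vecMulVec_apply, hs, hs0, div_mul_div_comm, sq, mul_div_cancel₀]

namespace OffBlockPreservesPSD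

variable {ρ : EReal} {g f : ℝ → ℝ}

theorem posSemidef_rankOneTest (h : OffBlockPreservesPSD ρ g f) {z w : ℝ} (hz : 0 < z)
    (hzw : z ≤ w) (hwρ : (w : EReal) < ρ) :
    !![g (z ^ 2 / w), g z, f z; g z, g w, f w; f z, f w, f w].PosSemidef := by
  have hw : 0 < w := hz.trans_le hzw
  set u := rankOneTestVector z w
  have hu : u ≠ 0 := rankOneTestVector_ne_zero hw
  have hentry : ∀ x ∈ ({z ^ 2 / w, z, w} : Set ℝ), 0 < x ∧ (x : EReal) < ρ := by
    have hzz : z ^ 2 / w ≤ z := by rw [div_le_iff₀ hw]; nlinarith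
    rintro x (rfl | rfl | rfl) <;> refine ⟨by positivity, lt_of_le_of_lt ?_ hwρ⟩ <;>
      exact_mod_cast (by linarith)
  have hB := h (vecMulVec u u) (by simpa using posSemidef_vecMulVec_self_star u)
    (rank_vecMulVec_eq_one hu hu) (by
      rw [vecMulVec_rankOneTestVector hw]
      intro i j; fin_cases i <;> fin_cases j <;> exact hentry _ (by simp))
  rw [vecMulVec_rankOneTestVector hw] at hB
  convert hB using 1
  ext i j; fin_cases i <;> fin_cases j <;> simp

theorem apply_mem_Icc (h : OffBlockPreservesPSD ρ g f) {w : ℝ} (hw : 0 < w)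
    (hwρ : (w : EReal) < ρ) : f w ∈ Set.Icc 0 (g w) := by
  have hB := h.posSemidef_rankOneTest hw le_rfl hwρ
  have hle := hB.two_mul_apply_le_add 1 2
  simp only [of_apply, cons_val', cons_val, cons_val_fin_one, cons_val_one, cons_val_zero] at hle
  exact ⟨hB.diag_nonneg (i := 2), by linarith⟩

theorem mul_eq_mul (h : OffBlockPreservesPSD ρ g f)
    (hg : ∀ z w, 0 < z → 0 < w → g (z ^ 2 / w) * g w = g z ^ 2) {z w : ℝ}
    (hz : 0 < z) (hzρ : (z : EReal) < ρ) (hw : 0 < w) (hwρ : (w : EReal) < ρ) :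
    f z * g w = f w * g z := by
  wlog hzw : z ≤ w generalizing z w
  · exact (this hw hwρ hz hzρ (le_of_not_ge hzw)).symm
  simpa using (h.posSemidef_rankOneTest hz hzw hwρ).apply_mul_eq_of_mul_eq_sq
    (i := 0) (j := 1) (by simpa using hg z w hz hw) 2

end OffBlockPreservesPSD

theorem monomial_sq_div_mul {α z w : ℝ} (hw : w ≠ 0) (k : ℕ) :
    α * (z ^ 2 / w) ^ k * (α * w ^ k) = (α * z ^ k) ^ 2 := by
  rw [mul_mul_mul_comm, ← mul_pow, div_mul_cancel₀ _ hw]; ring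

theorem forbidden_2x2_block_forces_scalar (ρ : EReal) (hρ : 0 < ρ)
    (α : ℝ) (hα : 0 < α) (k : ℕ) (f : ℝ → ℝ)
    (h : ∀ A : Matrix (Fin 3) (Fin 3) ℝ, A.PosSemidef → A.rank = 1 →
      (∀ i j, 0 < A i j ∧ (A i j : EReal) < ρ) →
      (Matrix.of fun i j => if i.val ≤ 1 ∧ j.val ≤ 1
        then α * A i j ^ k else f (A i j)).PosSemidef) :
    ∃ c ∈ Set.Icc (0 : ℝ) 1,
      ∀ x : ℝ, 0 < x → (x : EReal) < ρ → f x = c * (α * x ^ k) := by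
  have hP : OffBlockPreservesPSD ρ (fun x => α * x ^ k) f := h
  obtain ⟨x₀, hx₀, hx₀ρ⟩ := EReal.lt_iff_exists_real_btwn.mp hρ
  have hx₀ : 0 < x₀ := EReal.coe_pos.mp hx₀
  have hg₀ : 0 < α * x₀ ^ k := by positivity
  obtain ⟨hf₀, hfg₀⟩ := hP.apply_mem_Icc hx₀ hx₀ρ
  refine ⟨f x₀ / (α * x₀ ^ k), ⟨div_nonneg hf₀ hg₀.le, (div_le_one hg₀).mpr hfg₀⟩,
    fun x hx hxρ => ?_⟩
  have hcross := hP.mul_eq_mul (fun z w _ hw => monomial_sq_div_mul hw.ne' k) hx hxρ hx₀ hx₀ρ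
  rw [div_mul_eq_mul_div, eq_div_iff hg₀.ne', hcross]
end

section
/- Let 0 < ρ ≤ ∞, I = (0, ρ) ⊂ ℝ, α > 0, k ≥ 0 an integer, g(x) = α·x^k, and c ∈ [−1, 1], f(x) = c·g(x). Then for every 3×3 positive semidefinite matrix A with entries in I, the matrix M with M_{ij} = g(a_{ij}) when (i,j) ∈ {1,2}×{1,2} ∪ {(3,3)} and M_{ij} = f(a_{ij}) otherwise, is positive semidefinite. -/
/-!
The matrix is `α • (E ⊙ A^{∘k})`, where `A^{∘k}` is the `k`-th Hadamard power of `A` and `E` is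
the mask with entries `1` on the diagonal blocks `{1,2}`, `{3}` and `c` elsewhere. Hadamard powers
of a positive semidefinite matrix are positive semidefinite by the Schur product theorem, and for
`|c| ≤ 1` the mask is the Gram matrix of the unit vectors `(1, 0)` (first block) and
`(c, √(1 - c²))` (second block), so the Schur product theorem applies once more.
-/

open Matrix

namespace Matrix

open scoped ComplexOrder

variable {n 𝕜 : Type*} [Fintype n] [RCLike 𝕜]

theorem PosSemidef.hadamardPow {A : Matrix n n 𝕜} (hA : A.PosSemidef) (k : ℕ) :
    (of fun i j => A i j ^ k).PosSemidef := by
  induction k with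
  | zero =>
    have hones : (of fun i j => A i j ^ 0) = vecMulVec 1 (star 1) := by
      ext i j; simp [vecMulVec_apply]
    exact hones ▸ posSemidef_vecMulVec_self_star 1
  | succ m ih =>
    have hsucc : (of fun i j => A i j ^ (m + 1)) = A ⊙ of fun i j => A i j ^ m := by
      ext i j; simp [pow_succ']
    exact hsucc ▸ hA.hadamard ih

def twoBlockMask (p : n → Prop) [DecidablePred p] (c : ℝ) : Matrix n n ℝ :=
  of fun i j => if (p i ↔ p j) then 1 else c

theorem posSemidef_twoBlockMask (p : n → Prop) [DecidablePred p] {c : ℝ}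
    (hc : c ∈ Set.Icc (-1 : ℝ) 1) : (twoBlockMask p c).PosSemidef := by
  have hs : √(1 - c ^ 2) ^ 2 = 1 - c ^ 2 := Real.sq_sqrt (by nlinarith [hc.1, hc.2])
  let B : Matrix (Fin 2) n ℝ :=
    of ![fun i => if p i then 1 else c, fun i => if p i then 0 else √(1 - c ^ 2)]
  have hgram : twoBlockMask p c = Bᴴ * B := by
    ext i j
    by_cases hi : p i <;> by_cases hj : p j <;>
      simp [twoBlockMask, B, mul_apply, Fin.sum_univ_two, hi, hj, ← sq, hs]
  exact hgram ▸ posSemidef_conjTranspose_mul_self B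

end Matrix

theorem scalar_multiple_preserves_T3_general
    (α : ℝ) (hα : 0 < α) (k : ℕ) (c : ℝ) (hc : c ∈ Set.Icc (-1 : ℝ) 1)
    (A : Matrix (Fin 3) (Fin 3) ℝ) (hA : A.PosSemidef) :
    (Matrix.of fun i j : Fin 3 =>
      if (i.val ≤ 1 ∧ j.val ≤ 1) ∨ (i = 2 ∧ j = 2)
      then α * A i j ^ k else c * (α * A i j ^ k)).PosSemidef := by
  have hM : (Matrix.of fun i j : Fin 3 =>
      if (i.val ≤ 1 ∧ j.val ≤ 1) ∨ (i = 2 ∧ j = 2)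
      then α * A i j ^ k else c * (α * A i j ^ k)) =
      α • (twoBlockMask (fun i : Fin 3 => i.val ≤ 1) c ⊙ of fun i j => A i j ^ k) := by
    ext i j
    fin_cases i <;> fin_cases j <;> simp [twoBlockMask] <;> ring
  exact hM ▸ ((posSemidef_twoBlockMask _ hc).hadamard (hA.hadamardPow k)).smul hα.le

theorem scalar_multiple_preserves_T3 (ρ : EReal) (hρ : 0 < ρ)
    (α : ℝ) (hα : 0 < α) (k : ℕ) (c : ℝ) (hc : c ∈ Set.Icc (-1 : ℝ) 1)
    (A : Matrix (Fin 3) (Fin 3) ℝ) (hA : A.PosSemidef)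
    (hAI : ∀ i j, 0 < A i j ∧ (A i j : EReal) < ρ) :
    (Matrix.of fun i j : Fin 3 =>
      if (i.val ≤ 1 ∧ j.val ≤ 1) ∨ (i = 2 ∧ j = 2)
      then α * A i j ^ k else c * (α * A i j ^ k)).PosSemidef :=
  scalar_multiple_preserves_T3_general α hα k c hc A hA
end

section
/- Let 0 < ρ ≤ ∞, I = (0, ρ) ⊂ ℝ, α > 0, k ≥ 0 an integer, g(x) = α·x^k, and f : I → ℝ. Suppose for every 3×3 rank-one positive semidefinite matrix A with entries in I, the matrix with g applied to entries in positions {1,2}×{1,2} and to (3,3), and f applied to all other entries, is positive semidefinite. Then there exists c ∈ [−1, 1] with f(x) = c·g(x) for all x ∈ I. -/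
/-!
Testing on `A = v vᵀ / w` with `v = (z, w, w)`, `0 < z ≤ w < ρ`, the transformed matrix is
`!![g (z²/w), g z, f z; g z, g w, f w; f z, f w, g w]`. Since `g (z²/w) * g w = (g z)²` for a
monomial `g`, its leading `2 × 2` block is singular, with kernel spanned by `(g w, -g z)`;
evaluating the quadratic form at `(t g w, -t g z, 1)` gives `2t (g w f z - g z f w) + g w ≥ 0`
for all `t`, so `f z / g z = f w / g w`. The minor on `{2, 3}` gives `|f w| ≤ g w`.
-/

open Matrix

theorem Matrix.rank_vecMulVec_eq_one_s18 {K n : Type*} [Field K] [Fintype n] [DecidableEq n]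
    {a b : n → K} (ha : a ≠ 0) (hb : b ≠ 0) : (vecMulVec a b).rank = 1 := by
  refine le_antisymm (rank_vecMulVec_le a b) (Nat.one_le_iff_ne_zero.2 fun h0 => ?_)
  rw [rank, Submodule.finrank_eq_zero, LinearMap.range_eq_bot, ← Matrix.toLin'_apply',
    ← map_zero Matrix.toLin', Matrix.toLin'.injective.eq_iff] at h0
  exact vecMulVec_ne_zero ha hb h0

theorem eq_zero_of_forall_nonneg_mul_add {a b : ℝ} (h : ∀ t, 0 ≤ t * a + b) : a = 0 := by
  by_contra ha
  have := h (-(|b| + 1) / a)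
  rw [div_mul_cancel₀ _ ha] at this
  linarith [le_abs_self b]

theorem Matrix.PosSemidef.mul_eq_mul_of_rankOne_block {p a b c x y : ℝ} (hpab : p * b = a ^ 2)
    (hM : (!![p, a, x; a, b, y; x, y, c]).PosSemidef) : b * x = a * y := by
  have := eq_zero_of_forall_nonneg_mul_add (a := 2 * (b * x - a * y)) (b := c) fun t => by
    have hq := hM.dotProduct_mulVec_nonneg ![b * t, -a * t, 1]
    simp only [dotProduct, neg_mul, Pi.star_apply, star_trivial, mulVec, of_apply, cons_val',
      cons_val_fin_one, Fin.sum_univ_three, cons_val_zero, cons_val_one, mul_neg, cons_val,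
      mul_one, one_mul] at hq
    -- the test vector lies in the kernel of the rank-one block
    linear_combination hq + b * t ^ 2 * hpab
  linarith

theorem Matrix.PosSemidef.sq_le_mul {p a q c x y : ℝ} (hc : 0 < c)
    (hM : (!![p, a, x; a, q, y; x, y, c]).PosSemidef) : y ^ 2 ≤ q * c := by
  have hq := hM.dotProduct_mulVec_nonneg ![0, c, -y]
  simp only [dotProduct, Pi.star_apply, star_trivial, mulVec, of_apply, cons_val',
    cons_val_fin_one, Fin.sum_univ_three, cons_val_zero, mul_zero, cons_val_one, zero_add,
    cons_val, mul_neg, zero_mul, neg_mul] at hq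
  have : 0 ≤ c * (q * c - y ^ 2) := by linear_combination hq
  exact sub_nonneg.1 (nonneg_of_mul_nonneg_right this hc)

def applyBlock (g f : ℝ → ℝ) (A : Matrix (Fin 3) (Fin 3) ℝ) : Matrix (Fin 3) (Fin 3) ℝ :=
  Matrix.of fun i j => if (i.val ≤ 1 ∧ j.val ≤ 1) ∨ (i = 2 ∧ j = 2) then g (A i j) else f (A i j)

noncomputable def rankOneTest (z w : ℝ) : Matrix (Fin 3) (Fin 3) ℝ :=
  w⁻¹ • vecMulVec ![z, w, w] ![z, w, w]

section rankOneTest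

variable {z w : ℝ}

theorem rankOneTest_posSemidef (hw : 0 ≤ w) : (rankOneTest z w).PosSemidef :=
  (posSemidef_vecMulVec_self_star _).smul (inv_nonneg.2 hw)

theorem rankOneTest_rank (hw : w ≠ 0) : (rankOneTest z w).rank = 1 := by
  have hv : ![z, w, w] ≠ 0 := fun h => hw (by simpa using congrFun h 1)
  rw [rankOneTest, ← smul_vecMulVec]
  exact rank_vecMulVec_eq_one_s18 (smul_ne_zero (inv_ne_zero hw) hv) hv

theorem rankOneTest_apply_mem_Ioc (hz : 0 < z) (hzw : z ≤ w) (i j : Fin 3) :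
    rankOneTest z w i j ∈ Set.Ioc 0 w := by
  have hw : 0 < w := hz.trans_le hzw
  have hv : ∀ i, ![z, w, w] i ∈ Set.Ioc 0 w := by
    intro i; fin_cases i <;> simp [hz, hw, hzw]
  obtain ⟨hi0, hiw⟩ := hv i
  obtain ⟨hj0, hjw⟩ := hv j
  simp only [rankOneTest, Matrix.smul_apply, vecMulVec_apply, smul_eq_mul, Set.mem_Ioc]
  refine ⟨by positivity, ?_⟩
  rw [inv_mul_le_iff₀ hw]
  exact mul_le_mul hiw hjw hj0.le hw.le

theorem applyBlock_rankOneTest (g f : ℝ → ℝ) (hw : w ≠ 0) :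
    applyBlock g f (rankOneTest z w) =
      !![g (z ^ 2 / w), g z, f z; g z, g w, f w; f z, f w, g w] := by
  ext i j
  fin_cases i <;> fin_cases j <;> simp [applyBlock, rankOneTest] <;> field_simp

end rankOneTest

theorem mul_div_pow_mul_mul_pow (α : ℝ) (k : ℕ) {z w : ℝ} (hw : w ≠ 0) :
    α * (z ^ 2 / w) ^ k * (α * w ^ k) = (α * z ^ k) ^ 2 := by
  rw [div_pow]
  field_simp
  ring

theorem forbidden_block_with_diag_forces_scalar (ρ : EReal) (hρ : 0 < ρ)
    (α : ℝ) (hα : 0 < α) (k : ℕ) (f : ℝ → ℝ)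
    (h : ∀ A : Matrix (Fin 3) (Fin 3) ℝ, A.PosSemidef → A.rank = 1 →
      (∀ i j, 0 < A i j ∧ (A i j : EReal) < ρ) →
      (Matrix.of fun i j : Fin 3 =>
        if (i.val ≤ 1 ∧ j.val ≤ 1) ∨ (i = 2 ∧ j = 2)
        then α * A i j ^ k else f (A i j)).PosSemidef) :
    ∃ c ∈ Set.Icc (-1 : ℝ) 1,
      ∀ x : ℝ, 0 < x → (x : EReal) < ρ → f x = c * (α * x ^ k) := by
  set g : ℝ → ℝ := fun x => α * x ^ k
  have hg_pos : ∀ x, 0 < x → 0 < g x := fun x hx => by positivity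
  have hB : ∀ z w : ℝ, 0 < z → z ≤ w → (w : EReal) < ρ →
      (!![g (z ^ 2 / w), g z, f z; g z, g w, f w; f z, f w, g w]).PosSemidef := by
    intro z w hz hzw hwρ
    have hw : 0 < w := hz.trans_le hzw
    rw [← applyBlock_rankOneTest g f hw.ne']
    refine h _ (rankOneTest_posSemidef hw.le) (rankOneTest_rank hw.ne') fun i j => ?_
    obtain ⟨hpos, hle⟩ := rankOneTest_apply_mem_Ioc hz hzw i j
    exact ⟨hpos, (EReal.coe_le_coe_iff.2 hle).trans_lt hwρ⟩
  have hprop : ∀ z w : ℝ, 0 < z → z ≤ w → (w : EReal) < ρ → g w * f z = g z * f w := by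
    intro z w hz hzw hwρ
    exact (hB z w hz hzw hwρ).mul_eq_mul_of_rankOne_block
      (mul_div_pow_mul_mul_pow α k (hz.trans_le hzw).ne')
  obtain ⟨t, ht0, htρ⟩ := EReal.exists_between_coe_real hρ
  have ht : 0 < t := EReal.coe_pos.1 ht0
  refine ⟨f t / g t, ?_, fun x hx hxρ => ?_⟩
  · have hgt := hg_pos t ht
    have hbound : |f t| ≤ g t :=
      abs_le_of_sq_le_sq ((hB t t ht le_rfl htρ).sq_le_mul hgt |>.trans_eq (sq (g t)).symm) hgt.le
    rw [Set.mem_Icc, ← abs_le, abs_div, abs_of_pos hgt, div_le_one hgt]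
    exact hbound
  · rw [div_mul_eq_mul_div, eq_div_iff (hg_pos t ht).ne']
    rcases le_total x t with hxt | htx
    · linarith [hprop x t hx hxt htρ]
    · linarith [hprop t x ht htx hxρ]
end

section
/- Let n ≥ 2, let T be a partition of {1,…,n} into k blocks with 2 ≤ k ≤ n−1, let g(x) = α·x^m for α ≥ 0 and integer m ≥ 0, and let f : [0,∞) → ℝ. Then for every n×n positive semidefinite matrix A with nonnegative entries the matrix with (i,j) entry g(a_{ij}) when i,j are in the same block of T and f(a_{ij}) otherwise is positive semidefinite if and only if f(x) = c·g(x) for some c ∈ [−1/(k−1), 1]. -/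
open Matrix Finset

-- quadratic form expansion
lemma qf_expand {n : ℕ} (M : Matrix (Fin n) (Fin n) ℝ) (x : Fin n → ℝ) :
    x ⬝ᵥ M *ᵥ x = ∑ i, ∑ j, x i * (M i j * x j) := by
  simp [dotProduct, Matrix.mulVec, Finset.mul_sum]

-- rank one PSD
lemma rankone_psd {n : ℕ} (v : Fin n → ℝ) :
    (Matrix.of fun i j => v i * v j).PosSemidef := by
  refine Matrix.posSemidef_iff_dotProduct_mulVec.mpr ⟨?_, ?_⟩
  · ext i j
    simp [Matrix.conjTranspose_apply, mul_comm]
  · intro x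
    have hsx : star x = x := by
      funext i; simp
    rw [hsx, qf_expand]
    have : ∑ i, ∑ j, x i * (Matrix.of (fun i j => v i * v j) i j * x j)
        = (∑ i, v i * x i) ^ 2 := by
      rw [sq, Finset.sum_mul]
      refine Finset.sum_congr rfl fun i _ => ?_
      rw [Finset.mul_sum]
      refine Finset.sum_congr rfl fun j _ => ?_
      simp [Matrix.of_apply]; ring
    rw [this]
    positivity

-- scalar multiple PSD
lemma smul_psd {n : ℕ} {M : Matrix (Fin n) (Fin n) ℝ} (hM : M.PosSemidef) {a : ℝ}
    (ha : 0 ≤ a) : (Matrix.of fun i j => a * M i j).PosSemidef := by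
  refine Matrix.posSemidef_iff_dotProduct_mulVec.mpr ⟨?_, ?_⟩
  · ext i j
    have := hM.1.apply i j
    simp only [Matrix.conjTranspose_apply, Matrix.of_apply, star_trivial] at this ⊢
    rw [this]
  · intro x
    have h := hM.dotProduct_mulVec_nonneg x
    have hsx : star x = x := by funext i; simp
    rw [hsx] at h ⊢
    rw [qf_expand] at h ⊢
    have : ∑ i, ∑ j, x i * (Matrix.of (fun i j => a * M i j) i j * x j)
        = a * ∑ i, ∑ j, x i * (M i j * x j) := by
      rw [Finset.mul_sum]
      refine Finset.sum_congr rfl fun i _ => ?_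
      rw [Finset.mul_sum]
      refine Finset.sum_congr rfl fun j _ => ?_
      simp [Matrix.of_apply]; ring
    rw [this]
    exact mul_nonneg ha h


-- Schur product theorem
lemma hadamard_psd {n : ℕ} {A B : Matrix (Fin n) (Fin n) ℝ}
    (hA : A.PosSemidef) (hB : B.PosSemidef) :
    (Matrix.of fun i j => A i j * B i j).PosSemidef := by
  exact hA.hadamard hB

lemma entrypow_psd {n : ℕ} {A : Matrix (Fin n) (Fin n) ℝ} (hA : A.PosSemidef) (m : ℕ) :
    (Matrix.of fun i j => A i j ^ m).PosSemidef := by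
  induction m with
  | zero =>
    simp only [pow_zero]
    have := @rankone_psd n (fun _ => 1)
    simpa using this
  | succ m ih =>
    have := hadamard_psd hA ih
    have heq : (Matrix.of fun i j => A i j ^ (m+1))
        = Matrix.of fun i j => A i j * (Matrix.of fun i j => A i j ^ m) i j := by
      ext i j; simp [pow_succ]; ring
    rw [heq]; exact this

lemma quadform3 {n : ℕ} (M : Matrix (Fin n) (Fin n) ℝ) (p q r : Fin n)
    (hpq : p ≠ q) (hpr : p ≠ r) (hqr : q ≠ r) (a b c : ℝ) :
    (Pi.single p a + Pi.single q b + Pi.single r c) ⬝ᵥ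
      M *ᵥ (Pi.single p a + Pi.single q b + Pi.single r c)
    = a * M p p * a + a * M p q * b + a * M p r * c
      + b * M q p * a + b * M q q * b + b * M q r * c
      + c * M r p * a + c * M r q * b + c * M r r * c := by
  simp only [Matrix.mulVec_add, Matrix.mulVec_single, add_dotProduct,
    single_dotProduct, Pi.add_apply, Pi.smul_apply, Matrix.col_apply,
    MulOpposite.smul_eq_mul_unop, MulOpposite.unop_op]
  ring

lemma quadform2 {n : ℕ} (M : Matrix (Fin n) (Fin n) ℝ) (p q : Fin n)
    (hpq : p ≠ q) (a b : ℝ) :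
    (Pi.single p a + Pi.single q b) ⬝ᵥ M *ᵥ (Pi.single p a + Pi.single q b)
    = a * M p p * a + a * M p q * b + b * M q p * a + b * M q q * b := by
  simp only [Matrix.mulVec_add, Matrix.mulVec_single, add_dotProduct,
    single_dotProduct, Pi.add_apply, Pi.smul_apply, Matrix.col_apply,
    MulOpposite.smul_eq_mul_unop, MulOpposite.unop_op]
  ring

lemma blockC_psd {n k : ℕ} (hk : 2 ≤ k) (π : Fin n → Fin k) {c : ℝ}
    (hc1 : -1 / ((k : ℝ) - 1) ≤ c) (hc2 : c ≤ 1) :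
    (Matrix.of fun i j : Fin n => if π i = π j then (1 : ℝ) else c).PosSemidef := by
  have hkr : (0 : ℝ) < (k : ℝ) - 1 := by
    have : (2 : ℝ) ≤ (k : ℝ) := by exact_mod_cast hk
    linarith
  refine Matrix.posSemidef_iff_dotProduct_mulVec.mpr ⟨?_, ?_⟩
  · ext i j
    simp only [Matrix.conjTranspose_apply, Matrix.of_apply, star_trivial]
    by_cases h : π i = π j
    · rw [if_pos h.symm, if_pos h]
    · rw [if_neg (fun hh => h hh.symm), if_neg h]
  · intro x
    have hsx : star x = x := by funext i; simp
    rw [hsx, qf_expand]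
    set y : Fin k → ℝ := fun b => ∑ i ∈ Finset.univ.filter (fun i => π i = b), x i with hy
    have hxy : ∑ i, x i = ∑ b, y b := (Finset.sum_fiberwise univ π x).symm
    have h1 : ∀ i : Fin n, ∑ j, (if π i = π j then x i * x j else 0) = x i * y (π i) := by
      intro i
      have : y (π i) = ∑ j, if π j = π i then x j else 0 := by
        rw [hy]; exact Finset.sum_filter _ _
      rw [this, Finset.mul_sum]
      refine Finset.sum_congr rfl fun j _ => ?_
      by_cases h : π i = π j
      · rw [if_pos h, if_pos h.symm]
      · rw [if_neg h, if_neg (fun hh => h hh.symm), mul_zero]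
    have h2 : ∑ i, x i * y (π i) = ∑ b, (y b) ^ 2 := by
      rw [← Finset.sum_fiberwise univ π (fun i => x i * y (π i))]
      refine Finset.sum_congr rfl fun b _ => ?_
      have hcong : ∀ i ∈ Finset.univ.filter (fun i => π i = b),
          x i * y (π i) = x i * y b := by
        intro i hi
        rw [(Finset.mem_filter.mp hi).2]
      rw [Finset.sum_congr rfl hcong, ← Finset.sum_mul]
      rw [hy, sq]
    have e1 : ∑ i, ∑ j, c * (x i * x j) = c * (∑ i, x i) ^ 2 := by
      rw [sq, Finset.sum_mul_sum, Finset.mul_sum]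
      exact Finset.sum_congr rfl fun i _ => by rw [Finset.mul_sum]
    have e2 : ∑ i, ∑ j, (if π i = π j then x i * x j else 0) = ∑ b, (y b) ^ 2 := by
      rw [Finset.sum_congr rfl fun i _ => h1 i]
      exact h2
    have hsplit : ∑ i, ∑ j, x i * (Matrix.of (fun i j => if π i = π j then (1:ℝ) else c) i j * x j)
        = c * (∑ i, x i) ^ 2 + (1 - c) * ∑ b, (y b) ^ 2 := by
      have point : ∀ i j : Fin n,
          x i * (Matrix.of (fun i j => if π i = π j then (1:ℝ) else c) i j * x j)
          = c * (x i * x j) + (1 - c) * (if π i = π j then x i * x j else 0) := by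
        intro i j
        by_cases h : π i = π j <;> simp [Matrix.of_apply, h] <;> ring
      calc ∑ i, ∑ j, x i * (Matrix.of (fun i j => if π i = π j then (1:ℝ) else c) i j * x j)
          = ∑ i, ∑ j, (c * (x i * x j) + (1 - c) * (if π i = π j then x i * x j else 0)) := by
            exact Finset.sum_congr rfl fun i _ => Finset.sum_congr rfl fun j _ => point i j
        _ = ∑ i, (∑ j, c * (x i * x j)) + ∑ i, ∑ j, (1 - c) * (if π i = π j then x i * x j else 0) := by
            rw [← Finset.sum_add_distrib]
            exact Finset.sum_congr rfl fun i _ => Finset.sum_add_distrib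
        _ = c * (∑ i, x i) ^ 2 + (1 - c) * ∑ b, (y b) ^ 2 := by
            rw [e1]
            congr 1
            rw [← e2, Finset.mul_sum]
            exact Finset.sum_congr rfl fun i _ => by rw [Finset.mul_sum]
    rw [hsplit, hxy]
    set S := ∑ b, y b with hS
    set Q := ∑ b, (y b) ^ 2 with hQdef
    have hQ : 0 ≤ Q := Finset.sum_nonneg fun b _ => sq_nonneg _
    have hCS : S ^ 2 ≤ (k : ℝ) * Q := by
      have := sq_sum_le_card_mul_sum_sq (s := (Finset.univ : Finset (Fin k))) (f := y)
      simpa [hS, hQdef] using this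
    have hck : -1 ≤ c * ((k : ℝ) - 1) := by
      rwa [div_le_iff₀ hkr] at hc1
    rcases le_or_gt 0 c with hc0 | hc0
    · have t1 : 0 ≤ c * S ^ 2 := mul_nonneg hc0 (sq_nonneg _)
      have t2 : 0 ≤ (1 - c) * Q := mul_nonneg (by linarith) hQ
      linarith
    · have t1 : 0 ≤ (-c) * ((k : ℝ) * Q - S ^ 2) := mul_nonneg (by linarith) (by linarith)
      have t2 : 0 ≤ Q * (1 + c * ((k : ℝ) - 1)) := mul_nonneg hQ (by linarith)
      nlinarith [t1, t2]




theorem fixed_dim_classification (n k : ℕ) (hn : 2 ≤ n) (hk : 2 ≤ k) (hkn : k ≤ n - 1)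
    (π : Fin n → Fin k) (hπ : Function.Surjective π)
    (α : ℝ) (hα : 0 ≤ α) (m : ℕ) (f : ℝ → ℝ) :
    (∀ A : Matrix (Fin n) (Fin n) ℝ, A.PosSemidef → (∀ i j, 0 ≤ A i j) →
      (Matrix.of fun i j =>
        if π i = π j then α * A i j ^ m else f (A i j)).PosSemidef) ↔
    ∃ c ∈ Set.Icc (-1 / (k - 1) : ℝ) 1,
      ∀ x : ℝ, 0 ≤ x → f x = c * (α * x ^ m) := by
  have hkr : (0 : ℝ) < (k : ℝ) - 1 := by
    have : (2 : ℝ) ≤ (k : ℝ) := by exact_mod_cast hk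
    linarith
  have hst : ∀ u : Fin n → ℝ, star u = u := fun u => funext fun i => by simp
  -- indices
  obtain ⟨i1, i2, hi12, hπ12⟩ : ∃ i1 i2 : Fin n, i1 ≠ i2 ∧ π i1 = π i2 := by
    have hcard : Fintype.card (Fin k) < Fintype.card (Fin n) := by
      simp only [Fintype.card_fin]; omega
    exact Fintype.exists_ne_map_eq_of_card_lt π hcard
  have hknt : Nontrivial (Fin k) :=
    ⟨⟨⟨0, by omega⟩, ⟨1, by omega⟩, by simp [Fin.ext_iff]⟩⟩
  obtain ⟨b, hb⟩ := exists_ne (π i1)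
  obtain ⟨j, hj⟩ := hπ b
  have hji1 : π j ≠ π i1 := by rw [hj]; exact hb
  have hji2 : π j ≠ π i2 := by rw [← hπ12]; exact hji1
  have hne13 : ¬ π i1 = π j := fun h => hji1 h.symm
  have hne23 : ¬ π i2 = π j := fun h => hji2 h.symm
  have hjne1 : j ≠ i1 := fun h => hji1 (by rw [h])
  have hjne2 : j ≠ i2 := fun h => hji2 (by rw [h])
  constructor
  · intro H
    by_cases hα0 : α = 0
    · subst hα0
      refine ⟨0, ⟨?_, by norm_num⟩, ?_⟩
      · rw [div_le_iff₀ hkr]; norm_num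
      · intro x hx
        set v : Fin n → ℝ := fun _ => Real.sqrt x with hv
        have hA : (Matrix.of fun i j => v i * v j).PosSemidef := rankone_psd v
        have hM := H _ hA (fun i j => by
          simp [hv, Real.mul_self_sqrt hx, hx])
        have h0 := hM.dotProduct_mulVec_nonneg (Pi.single i1 1 + Pi.single j 1)
        have h1 := hM.dotProduct_mulVec_nonneg (Pi.single i1 1 + Pi.single j (-1))
        rw [hst _, quadform2 _ _ _ hjne1.symm] at h0 h1
        simp only [Matrix.of_apply, hv, Real.mul_self_sqrt hx,
          if_neg hne13, if_neg hji1] at h0 h1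
        norm_num at h0 h1
        have : f x = 0 := by nlinarith [h0, h1]
        rw [this]; ring
    · have hαpos : 0 < α := lt_of_le_of_ne hα (Ne.symm hα0)
      -- proportionality
      have key : ∀ s t : ℝ, 0 ≤ s → 0 ≤ t → t ^ m * f s = s ^ m * f t := by
        intro s t hs ht
        set v : Fin n → ℝ := fun i => if i = i1 then s else if i = i2 then t
          else if i = j then 1 else 0 with hv
        have hv1 : v i1 = s := by simp [hv]
        have hv2 : v i2 = t := by simp [hv, hi12.symm]
        have hv3 : v j = 1 := by simp [hv, hjne1, hjne2]
        have hv0 : ∀ i, 0 ≤ v i := by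
          intro i; rw [hv]; dsimp only
          split_ifs <;> first | exact hs | exact ht | norm_num
        have hA : (Matrix.of fun i j => v i * v j).PosSemidef := rankone_psd v
        have hM := H _ hA (fun i j => mul_nonneg (hv0 i) (hv0 j))
        have hform : ∀ ε : ℝ, 0 ≤ 2 * ε * (t ^ m * f s - s ^ m * f t) + ε ^ 2 * α := by
          intro ε
          have h := hM.dotProduct_mulVec_nonneg (Pi.single i1 (t ^ m) + Pi.single i2 (-(s ^ m)) + Pi.single j ε)
          rw [hst _, quadform3 _ _ _ _ hi12 hjne1.symm hjne2.symm] at h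
          simp only [Matrix.of_apply, hv1, hv2, hv3, hπ12, if_pos rfl,
            if_neg hne13, if_neg hne23, if_neg hji1, if_neg hji2,
            mul_pow, mul_one, one_mul, one_pow] at h
          norm_num at h
          linarith [h]
        set b0 := t ^ m * f s - s ^ m * f t with hb0def
        have h1 := hform (-(b0) / α)
        have heq : 2 * (-(b0) / α) * b0 + (-(b0) / α) ^ 2 * α = -(b0 ^ 2) / α := by
          field_simp; ring
        rw [heq] at h1
        have h2 : 0 ≤ -(b0 ^ 2) := by
          have := mul_le_mul_of_nonneg_right h1 hαpos.le
          rwa [zero_mul, div_mul_cancel₀ _ (ne_of_gt hαpos)] at this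
        have hb0 : b0 = 0 := by nlinarith [sq_nonneg b0]
        rw [hb0def] at hb0; linarith
      have hprop : ∀ x : ℝ, 0 ≤ x → f x = f 1 * x ^ m := by
        intro x hx
        have := key x 1 hx zero_le_one
        simp only [one_pow, one_mul] at this
        rw [this]; ring
      -- bounds via all-ones matrix
      have hA1 : (Matrix.of fun i j : Fin n => (1 : ℝ) * 1).PosSemidef :=
        rankone_psd (fun _ => 1)
      have hM1 := H _ hA1 (fun i j => by norm_num)
      -- upper bound
      have hupper : f 1 ≤ α := by
        have h := hM1.dotProduct_mulVec_nonneg (Pi.single i1 1 + Pi.single j (-1))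
        rw [hst _, quadform2 _ _ _ hjne1.symm] at h
        simp only [Matrix.of_apply, one_mul, one_pow, if_pos rfl,
          if_neg hne13, if_neg hji1] at h
        norm_num at h
        linarith
      -- lower bound
      have hlower : 0 ≤ α + ((k : ℝ) - 1) * f 1 := by
        set ρ := Function.surjInv hπ with hρ
        have hρπ : ∀ b : Fin k, π (ρ b) = b := fun b => Function.surjInv_eq hπ b
        have hN := hM1.submatrix ρ
        have h := hN.dotProduct_mulVec_nonneg (fun _ => 1)
        have hstk : ∀ u : Fin k → ℝ, star u = u := fun u => funext fun i => by simp
        rw [hstk _, qf_expand] at h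
        simp only [Matrix.submatrix_apply, Matrix.of_apply, hρπ, one_mul, mul_one,
          one_pow] at h
        have hrow : ∀ b : Fin k, (∑ b' : Fin k, if b = b' then α else f 1)
            = α + ((k : ℝ) - 1) * f 1 := by
          intro b
          have hpt : ∀ b' : Fin k, (if b = b' then α else f 1)
              = f 1 + (if b = b' then α - f 1 else 0) := by
            intro b'; split_ifs <;> ring
          rw [Finset.sum_congr rfl fun b' _ => hpt b', Finset.sum_add_distrib,
            Finset.sum_const, Finset.sum_ite_eq]
          simp only [Finset.card_univ, Fintype.card_fin, nsmul_eq_mul,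
            Finset.mem_univ, if_pos]
          ring
        rw [Finset.sum_congr rfl fun b _ => hrow b, Finset.sum_const] at h
        simp only [Finset.card_univ, Fintype.card_fin, nsmul_eq_mul] at h
        have hkpos : (0 : ℝ) < (k : ℝ) := by linarith
        nlinarith [h]
      refine ⟨f 1 / α, ⟨?_, ?_⟩, ?_⟩
      · rw [div_le_div_iff₀ hkr hαpos]
        nlinarith [hlower]
      · rw [div_le_one hαpos]; exact hupper
      · intro x hx
        rw [hprop x hx]
        field_simp
  · rintro ⟨c, ⟨hc1, hc2⟩, hf⟩ A hA hA0
    have hMeq : (Matrix.of fun i j =>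
        if π i = π j then α * A i j ^ m else f (A i j))
        = Matrix.of fun i j =>
          (Matrix.of fun i j : Fin n => if π i = π j then (1 : ℝ) else c) i j *
          (Matrix.of fun i j => α * (Matrix.of fun i j => A i j ^ m) i j) i j := by
      ext i j
      simp only [Matrix.of_apply]
      by_cases h : π i = π j
      · simp [h]
      · simp [h, hf (A i j) (hA0 i j)]
    rw [hMeq]
    exact hadamard_psd (blockC_psd hk π hc1 hc2)
      (smul_psd (entrypow_psd hA m) hα)
end
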